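/- arXiv:1910.03193 — 5 statements merged into one kernel-verified Lean document; each statement's English description precedes it below -/
import Mathlib

section
/- Let σ : ℝ → ℝ be a Tauber–Wiener function, X a Banach space, K ⊆ X a compact set, V a compact set in C(K), and f : V → ℝ a continuous functional. Then for every ε > 0 there exist a positive integer n, points x_1, …, x_m ∈ K, and real constants c_i, θ_i, ξ_{ij} (for i = 1,…,n, j = 1,…,m) such that |f(u) − Σ_{i=1}^n c_i σ(Σ_{j=1}^m ξ_{ij} u(x_j) + θ_i)| < ε holds for all u ∈ V. -/
/-- A function `σ : ℝ → ℝ` is a Tauber–Wiener function if for every pair of reals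
`a < b`, the finite linear combinations `x ↦ ∑ᵢ cᵢ σ(λᵢ x + θᵢ)` are dense in
`C([a,b])` with the sup-norm. -/
def IsTauberWiener (σ : ℝ → ℝ) : Prop :=
  ∀ a b : ℝ, a < b → ∀ f : ℝ → ℝ, ContinuousOn f (Set.Icc a b) →
    ∀ ε : ℝ, 0 < ε →
      ∃ (N : ℕ) (c lam θ : Fin N → ℝ),
        ∀ x ∈ Set.Icc a b, |f x - ∑ i, c i * σ (lam i * x + θ i)| < ε

/-!
Exponentials `u ↦ exp (∑ₓ ξ x * u x)` of finitely supported combinations of point evaluations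
form a multiplicative family, so their span is the image of the group algebra `ℝ[K →₀ ℝ]` in
`C(V)`; it separates points because `exp` is injective, and Stone–Weierstrass approximates `f`
on `V` by a finite sum `∑ a_ξ exp (ℓ_ξ u)`. On the compact set `V` the finitely many arguments
`ℓ_ξ u` stay in a fixed interval, on which the Tauber–Wiener property approximates `exp` by
`∑ₖ cₖ σ (λₖ t + θₖ)`. As `λ ℓ_ξ = ℓ_{λ ξ}`, substituting yields a network of the required shape.
-/

open Finsupp (linearCombination)

theorem IsTauberWiener.exists_finset_sum_approx {σ : ℝ → ℝ} (hσ : IsTauberWiener σ) {h : ℝ → ℝ}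
    (hh : Continuous h) {a b : ℝ} (hab : a < b) {ι : Type*} (s : Finset ι) (w : ι → ℝ)
    {ε : ℝ} (hε : 0 < ε) :
    ∃ (N : ℕ) (c lam θ : Fin N → ℝ), ∀ t : ι → ℝ, (∀ i ∈ s, t i ∈ Set.Icc a b) →
      |∑ i ∈ s, w i * h (t i) - ∑ i ∈ s, w i * ∑ k, c k * σ (lam k * t i + θ k)| < ε := by
  set W := ∑ i ∈ s, |w i|
  have hW : 0 ≤ W := Finset.sum_nonneg fun i _ => abs_nonneg (w i)
  obtain ⟨N, c, lam, θ, hN⟩ := hσ a b hab h hh.continuousOn (ε / (W + 1)) (by positivity)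
  refine ⟨N, c, lam, θ, fun t ht => ?_⟩
  calc |∑ i ∈ s, w i * h (t i) - ∑ i ∈ s, w i * ∑ k, c k * σ (lam k * t i + θ k)|
      = |∑ i ∈ s, w i * (h (t i) - ∑ k, c k * σ (lam k * t i + θ k))| := by
        simp only [mul_sub, Finset.sum_sub_distrib]
    _ ≤ ∑ i ∈ s, |w i| * (ε / (W + 1)) := by
        refine (Finset.abs_sum_le_sum_abs _ _).trans (Finset.sum_le_sum fun i hi => ?_)
        rw [abs_mul]
        exact mul_le_mul_of_nonneg_left (hN _ (ht i hi)).le (abs_nonneg _)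
    _ = W * ε / (W + 1) := by rw [← Finset.sum_mul, mul_div_assoc]
    _ < ε := by rw [div_lt_iff₀ (by positivity)]; nlinarith

theorem exists_fin_sum_eq_finset_sum_linearCombination {T ι : Type*} (σ : ℝ → ℝ) (s : Finset ι)
    (c θ : ι → ℝ) (η : ι → T →₀ ℝ) :
    ∃ (n m : ℕ), 0 < n ∧ ∃ (x : Fin m → T) (c' θ' : Fin n → ℝ) (ξ : Fin n → Fin m → ℝ),
      ∀ u : T → ℝ, ∑ i, c' i * σ (∑ j, ξ i j * u (x j) + θ' i) =
        ∑ i ∈ s, c i * σ (linearCombination ℝ u (η i) + θ i) := by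
  classical
  set S := s.biUnion fun i => (η i).support
  have hS : ∀ i ∈ s, ∀ u : T → ℝ,
      ∑ j, η i (S.equivFin.symm j) * u (S.equivFin.symm j) = linearCombination ℝ u (η i) := by
    intro i hi u
    rw [Finsupp.linearCombination_apply, Finsupp.sum_of_support_subset (η i)
      (Finset.subset_biUnion_of_mem (fun i => (η i).support) hi) (fun x a => a • u x)
      (fun _ _ => zero_smul ℝ _), ← Finset.sum_coe_sort S,
      ← S.equivFin.symm.sum_comp]
    rfl
  -- a leading neuron with zero weight makes the width positive
  refine ⟨s.card + 1, S.card, Nat.succ_pos _, fun j => S.equivFin.symm j,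
    Fin.cons 0 fun i => c (s.equivFin.symm i), Fin.cons 0 fun i => θ (s.equivFin.symm i),
    Fin.cons 0 fun i j => η (s.equivFin.symm i) (S.equivFin.symm j), fun u => ?_⟩
  rw [Fin.sum_univ_succ, ← Finset.sum_coe_sort s, ← s.equivFin.symm.sum_comp]
  simp [hS _ (Subtype.prop _)]

section

variable {T : Type*} [TopologicalSpace T]

theorem continuous_linearCombination_eval (ξ : T →₀ ℝ) :
    Continuous fun u : C(T, ℝ) => linearCombination ℝ (⇑u) ξ := by
  simp only [Finsupp.linearCombination_apply, Finsupp.sum]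
  fun_prop

noncomputable def expLinearCombination (V : Set C(T, ℝ)) :
    Multiplicative (T →₀ ℝ) →* C(V, ℝ) where
  toFun ξ := ⟨fun u => Real.exp (linearCombination ℝ (⇑(u : C(T, ℝ))) ξ.toAdd),
    Real.continuous_exp.comp ((continuous_linearCombination_eval _).comp continuous_subtype_val)⟩
  map_one' := by ext; simp
  map_mul' ξ η := by ext; simp [Real.exp_add]

theorem separatesPoints_range_lift_expLinearCombination (V : Set C(T, ℝ)) :
    (AddMonoidAlgebra.lift ℝ C(V, ℝ) (T →₀ ℝ) (expLinearCombination V)).range.SeparatesPoints := by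
  intro u v huv
  obtain ⟨x, hx⟩ : ∃ x, (u : C(T, ℝ)) x ≠ (v : C(T, ℝ)) x := by
    by_contra! h
    exact huv (Subtype.ext (ContinuousMap.ext h))
  refine ⟨_, ⟨_, ⟨AddMonoidAlgebra.single (Finsupp.single x 1) 1, rfl⟩, rfl⟩, ?_⟩
  simpa [expLinearCombination] using hx

theorem exists_finsupp_sum_exp_linearCombination_approx {V : Set C(T, ℝ)} (hV : IsCompact V)
    {f : C(T, ℝ) → ℝ} (hf : ContinuousOn f V) {ε : ℝ} (hε : 0 < ε) :
    ∃ p : (T →₀ ℝ) →₀ ℝ, ∀ u ∈ V,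
      |f u - p.sum fun ξ a => a * Real.exp (linearCombination ℝ (⇑u) ξ)| < ε := by
  have : CompactSpace V := isCompact_iff_compactSpace.mp hV
  obtain ⟨⟨_, p, rfl⟩, hp⟩ :=
    ContinuousMap.exists_mem_subalgebra_near_continuousMap_of_separatesPoints _
      (separatesPoints_range_lift_expLinearCombination V) ⟨V.domRestrict f, hf.domRestrict⟩ ε hε
  refine ⟨p.coeff, fun u hu => ?_⟩
  have hu := (ContinuousMap.norm_coe_le_norm _ ⟨u, hu⟩).trans_lt hp
  rw [abs_sub_comm]
  simpa [AddMonoidAlgebra.lift_apply, Finsupp.sum, expLinearCombination] using hu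

theorem IsCompact.exists_linearCombination_mem_Icc {V : Set C(T, ℝ)} (hV : IsCompact V)
    (s : Finset (T →₀ ℝ)) :
    ∃ R > 0, ∀ u ∈ V, ∀ ξ ∈ s, linearCombination ℝ (⇑u) ξ ∈ Set.Icc (-R) R := by
  obtain ⟨C, hC⟩ := hV.exists_bound_of_continuousOn
    (continuous_pi fun ξ : s => continuous_linearCombination_eval (ξ : T →₀ ℝ)).continuousOn
  refine ⟨max C 1, by positivity, fun u hu ξ hξ => abs_le.mp ?_⟩
  calc |linearCombination ℝ (⇑u) ξ|
      ≤ ‖fun ξ : s => linearCombination ℝ (⇑u) ξ‖ :=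
        norm_le_pi_norm (fun ξ : s => linearCombination ℝ (⇑u) ξ) ⟨ξ, hξ⟩
    _ ≤ max C 1 := (hC u hu).trans (le_max_left _ _)

end

theorem universal_approximation_for_functional_general
    {X : Type*} [NormedAddCommGroup X]
    (σ : ℝ → ℝ) (hσ : IsTauberWiener σ)
    (K : Set X)
    (V : Set C(K, ℝ)) (hV : IsCompact V)
    (f : C(K, ℝ) → ℝ) (hf : ContinuousOn f V)
    (ε : ℝ) (hε : 0 < ε) :
    ∃ (n m : ℕ), 0 < n ∧
      ∃ (x : Fin m → K) (c θ : Fin n → ℝ) (ξ : Fin n → Fin m → ℝ),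
        ∀ u ∈ V, |f u - ∑ i, c i * σ (∑ j, ξ i j * u (x j) + θ i)| < ε := by
  obtain ⟨p, hp⟩ := exists_finsupp_sum_exp_linearCombination_approx hV hf (half_pos hε)
  obtain ⟨R, hR, hmem⟩ := hV.exists_linearCombination_mem_Icc p.support
  obtain ⟨N, a, lam, b, hexp⟩ := hσ.exists_finset_sum_approx Real.continuous_exp
    (neg_lt_self hR) p.support p (half_pos hε)
  obtain ⟨n, m, hn, x, c, θ, ξ, hnet⟩ := exists_fin_sum_eq_finset_sum_linearCombination σ
    (p.support ×ˢ Finset.univ) (fun q => p q.1 * a q.2) (fun q => b q.2) (fun q => lam q.2 • q.1)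
  refine ⟨n, m, hn, x, c, θ, ξ, fun u hu => ?_⟩
  have hnet_u : ∑ i, c i * σ (∑ j, ξ i j * u (x j) + θ i) =
      ∑ η ∈ p.support, p η * ∑ k, a k * σ (lam k * linearCombination ℝ (⇑u) η + b k) := by
    simp only [hnet, Finset.sum_product, map_smul, smul_eq_mul, Finset.mul_sum, mul_assoc]
  have hf_exp := hp u hu
  have hexp_net := hexp (fun η => linearCombination ℝ (⇑u) η) (hmem u hu)
  rw [Finsupp.sum] at hf_exp
  rw [hnet_u]
  exact (abs_sub_le _ _ _).trans_lt (by linarith)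

/-- **Universal Approximation Theorem for Functional** (Chen & Chen).
If `σ` is Tauber–Wiener, `X` a Banach space, `K ⊆ X` compact, `V` a compact set in
`C(K)` and `f` a continuous functional on `V`, then for every `ε > 0` there exist a
positive integer `n`, points `x₁, …, x_m ∈ K` and real constants `cᵢ, θᵢ, ξᵢⱼ` such
that `|f(u) − ∑ᵢ cᵢ σ(∑ⱼ ξᵢⱼ u(xⱼ) + θᵢ)| < ε` for all `u ∈ V`. -/
theorem universal_approximation_for_functional
    {X : Type*} [NormedAddCommGroup X] [NormedSpace ℝ X] [CompleteSpace X]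
    (σ : ℝ → ℝ) (hσ : IsTauberWiener σ)
    (K : Set X) (hK : IsCompact K)
    (V : Set C(K, ℝ)) (hV : IsCompact V)
    (f : C(K, ℝ) → ℝ) (hf : ContinuousOn f V)
    (ε : ℝ) (hε : 0 < ε) :
    ∃ (n m : ℕ), 0 < n ∧
      ∃ (x : Fin m → K) (c θ : Fin n → ℝ) (ξ : Fin n → Fin m → ℝ),
        ∀ u ∈ V, |f u - ∑ i, c i * σ (∑ j, ξ i j * u (x j) + θ i)| < ε :=
  universal_approximation_for_functional_general σ hσ K V hV f hf ε hε
end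

section
/- Let σ : ℝ → ℝ be a continuous function of at most polynomial growth, i.e., there exist C > 0 and k ∈ ℕ such that |σ(x)| ≤ C(1 + |x|)^k for all x ∈ ℝ (so that σ defines a tempered distribution on ℝ). Then σ is a Tauber–Wiener function if and only if σ is not a polynomial. -/
open Set Filter Topology Polynomial MeasureTheory Convolution

theorem Submodule.integral_mem_of_isClosed {α E : Type*} [MeasurableSpace α] {μ : Measure α}
    [NormedAddCommGroup E] [NormedSpace ℝ E] [CompleteSpace E] {S : Submodule ℝ E}
    (hS : IsClosed (S : Set E)) {f : α → E} (hf : Integrable f μ) (hfS : ∀ x, f x ∈ S) :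
    ∫ x, f x ∂μ ∈ S := by
  -- the instance making `E ⧸ S` a normed space
  have : IsClosed (S : Set E) := hS
  rw [← S.ker_mkQ, LinearMap.mem_ker, ← S.coe_mkQL, ← S.mkQL.integral_comp_comm hf]
  simp [(Submodule.Quotient.mk_eq_zero S).2 (hfS _)]

theorem Submodule.mem_of_hasDerivAt_of_isClosed {E : Type*} [NormedAddCommGroup E]
    [NormedSpace ℝ E] {S : Submodule ℝ E} (hS : IsClosed (S : Set E)) {f : ℝ → E} {f' : E} {x : ℝ}
    (hf : HasDerivAt f f' x) (hfS : ∀ y, f y ∈ S) : f' ∈ S :=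
  hS.mem_of_tendsto (hasDerivAt_iff_tendsto_slope.1 hf) <| Eventually.of_forall fun y =>
    S.smul_mem _ (S.sub_mem (hfS y) (hfS x))

namespace TauberWiener

variable {a b : ℝ}

def ridge (a b : ℝ) (f : C(ℝ, ℝ)) (l t : ℝ) : C(Icc a b, ℝ) :=
  ⟨fun x => f (l * x + t), by fun_prop⟩

@[simp]
lemma ridge_apply (f : C(ℝ, ℝ)) (l t : ℝ) (x : Icc a b) : ridge a b f l t x = f (l * x + t) :=
  rfl

def ridgeSpan (f : C(ℝ, ℝ)) (a b : ℝ) : Submodule ℝ C(Icc a b, ℝ) :=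
  Submodule.span ℝ (range fun p : ℝ × ℝ => ridge a b f p.1 p.2)

lemma ridge_mem_ridgeSpan (f : C(ℝ, ℝ)) (l t : ℝ) : ridge a b f l t ∈ ridgeSpan f a b :=
  Submodule.subset_span ⟨(l, t), rfl⟩

lemma mem_ridgeSpan_iff {f : C(ℝ, ℝ)} {g : C(Icc a b, ℝ)} :
    g ∈ ridgeSpan f a b ↔
      ∃ (N : ℕ) (c lam θ : Fin N → ℝ), g = ∑ i, c i • ridge a b f (lam i) (θ i) := by
  constructor
  · intro hg
    obtain ⟨N, c, r, rfl⟩ := Submodule.mem_span_set'.1 hg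
    choose p hp using fun i => (r i).2
    exact ⟨N, c, fun i => (p i).1, fun i => (p i).2, by simp only [hp]⟩
  · rintro ⟨N, c, lam, θ, rfl⟩
    exact Submodule.sum_mem _ fun i _ => Submodule.smul_mem _ _ (ridge_mem_ridgeSpan f _ _)

lemma isTauberWiener_iff (σ : C(ℝ, ℝ)) :
    IsTauberWiener σ ↔ ∀ a b, a < b → (ridgeSpan σ a b).topologicalClosure = ⊤ := by
  constructor
  · refine fun h a b hab => Submodule.eq_top_iff'.2 fun F => Metric.mem_closure_iff.2 ?_
    intro ε hε
    obtain ⟨N, c, lam, θ, hN⟩ := h a b hab (IccExtend hab.le F)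
      (F.continuous.Icc_extend' (f := F)).continuousOn ε hε
    refine ⟨_, mem_ridgeSpan_iff.2 ⟨N, c, lam, θ, rfl⟩, (ContinuousMap.dist_lt_iff hε).2 ?_⟩
    intro x
    simpa [Real.dist_eq] using hN x x.2
  · intro h a b hab f hf ε hε
    have hF : (⟨_, hf.domRestrict⟩ : C(Icc a b, ℝ)) ∈ (ridgeSpan σ a b).topologicalClosure := by
      rw [h a b hab]; trivial
    obtain ⟨g, hg, hdist⟩ := Metric.mem_closure_iff.1 hF ε hε
    obtain ⟨N, c, lam, θ, rfl⟩ := mem_ridgeSpan_iff.1 hg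
    refine ⟨N, c, lam, θ, fun x hx => ?_⟩
    simpa [Real.dist_eq] using (ContinuousMap.dist_apply_le_dist ⟨x, hx⟩).trans_lt hdist

variable {S : Submodule ℝ C(Icc a b, ℝ)}

lemma ridge_mem_of_eq_integral (hS : IsClosed (S : Set C(Icc a b, ℝ))) {σ ψ : C(ℝ, ℝ)}
    (hσS : ∀ l t, ridge a b σ l t ∈ S) {φ : ℝ → ℝ} (hφ : Continuous φ)
    (hφc : HasCompactSupport φ) (hψ : ∀ y, ψ y = ∫ u, φ u * σ (y - u)) (l t : ℝ) :
    ridge a b ψ l t ∈ S := by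
  have hcont : Continuous fun u => φ u • ridge a b σ l (t - u) :=
    hφ.smul <| ContinuousMap.continuous_of_continuous_uncurry _ <| by
      simp only [ridge_apply]; fun_prop
  have hint := hcont.integrable_of_hasCompactSupport (μ := volume) hφc.smul_right
  have hridge : ridge a b ψ l t = ∫ u, φ u • ridge a b σ l (t - u) := by
    ext x
    simp [ContinuousMap.integral_apply hint, hψ, add_sub_assoc]
  rw [hridge]
  exact Submodule.integral_mem_of_isClosed hS hint fun u => S.smul_mem _ (hσS _ _)

lemma hasDerivAt_ridge {g g' : C(ℝ, ℝ)} (hg : ∀ y, HasDerivAt g (g' y) y) (l t : ℝ) :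
    HasDerivAt (fun s => ridge a b g s t)
      (X.toContinuousMapOn (Icc a b) * ridge a b g' l t) l := by
  set F : ℝ → C(Icc a b, ℝ) := fun s => X.toContinuousMapOn (Icc a b) * ridge a b g' s t
  have hF : Continuous F := continuous_const.mul <|
    ContinuousMap.continuous_of_continuous_uncurry _ (by simp only [ridge_apply]; fun_prop)
  have hFTC : ∀ s, ridge a b g s t = ridge a b g l t + ∫ r in l..s, F r := by
    intro s
    ext x
    have hderiv : ∀ r, HasDerivAt (fun r => g (r * x + t)) (x * g' (r * x + t)) r := fun r => by
      simpa [Function.comp_def, mul_comm] using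
        (hg _).comp r ((hasDerivAt_mul_const (x : ℝ)).add_const t)
    rw [ContinuousMap.add_apply, show (∫ r in l..s, F r) x = ∫ r in l..s, F r x from
      ((ContinuousMap.evalCLM ℝ x).intervalIntegral_comp_comm (hF.intervalIntegrable _ _)).symm]
    simp only [ridge_apply, F, ContinuousMap.mul_apply, toContinuousMapOn_apply,
      toContinuousMap_apply, eval_X]
    rw [intervalIntegral.integral_eq_sub_of_hasDerivAt (fun r _ => hderiv r)
      ((by fun_prop : Continuous fun r => (x : ℝ) * g' (r * x + t)).intervalIntegrable _ _)]
    ring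
  rw [funext hFTC]
  exact ((hF.integral_hasStrictDerivAt l l).hasDerivAt).const_add _

lemma pow_mul_ridge_mem (hS : IsClosed (S : Set C(Icc a b, ℝ))) {g : ℕ → C(ℝ, ℝ)}
    (hg : ∀ n y, HasDerivAt (g n) (g (n + 1) y) y) (h0 : ∀ l t, ridge a b (g 0) l t ∈ S)
    (n : ℕ) (l t : ℝ) : X.toContinuousMapOn (Icc a b) ^ n * ridge a b (g n) l t ∈ S := by
  induction n generalizing l with
  | zero => simpa using h0 l t
  | succ n ih =>
    rw [pow_succ, mul_assoc]
    exact Submodule.mem_of_hasDerivAt_of_isClosed hS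
      ((hasDerivAt_ridge (hg n) l t).const_mul _) (ih ·)

lemma pow_mem_of_iteratedDeriv_ne_zero (hS : IsClosed (S : Set C(Icc a b, ℝ)))
    {σ : C(ℝ, ℝ)} (hσS : ∀ l t, ridge a b σ l t ∈ S) (φ : ContDiffBump (0 : ℝ)) {n : ℕ} {u : ℝ}
    (hu : iteratedDeriv n (φ.normed volume ⋆[ContinuousLinearMap.lsmul ℝ ℝ] σ) u ≠ 0) :
    X.toContinuousMapOn (Icc a b) ^ n ∈ S := by
  set ψ := φ.normed volume ⋆[ContinuousLinearMap.lsmul ℝ ℝ] σ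
  have hψ : ContDiff ℝ (⊤ : ℕ∞) ψ := φ.hasCompactSupport_normed.contDiff_convolution_left _
    φ.contDiff_normed σ.continuous.locallyIntegrable
  let g (k : ℕ) : C(ℝ, ℝ) :=
    ⟨iteratedDeriv k ψ, hψ.continuous_iteratedDeriv k (mod_cast le_top)⟩
  have hg : ∀ k y, HasDerivAt (g k) (g (k + 1) y) y := fun k y => by
    simpa [g, iteratedDeriv_succ] using
      ((hψ.differentiable_iteratedDeriv k (mod_cast WithTop.coe_lt_top _)) y).hasDerivAt
  have h0 : ∀ l t, ridge a b (g 0) l t ∈ S :=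
    ridge_mem_of_eq_integral hS hσS (φ := φ.normed volume) φ.continuous_normed
      φ.hasCompactSupport_normed fun y => by simp [g, ψ, convolution_def]
  have hmem := pow_mul_ridge_mem hS hg h0 n 0 u
  have : X.toContinuousMapOn (Icc a b) ^ n * ridge a b (g n) 0 u =
      iteratedDeriv n ψ u • X.toContinuousMapOn (Icc a b) ^ n := by
    ext x
    simp [g, mul_comm]
  rw [this] at hmem
  exact (S.smul_mem_iff hu).1 hmem

lemma eq_top_of_pow_mem (hS : IsClosed (S : Set C(Icc a b, ℝ)))
    (hpow : ∀ n, X.toContinuousMapOn (Icc a b) ^ n ∈ S) : S = ⊤ := by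
  have hpoly : (polynomialFunctions (Icc a b) : Set C(Icc a b, ℝ)) ⊆ S := by
    rintro _ ⟨p, -, rfl⟩
    induction p using Polynomial.induction_on' with
    | add p q hp hq => rw [map_add]; exact S.add_mem hp hq
    | monomial n c =>
      rw [← smul_X_eq_monomial, AlgHom.coe_toRingHom, map_smul, map_pow]
      exact S.smul_mem c (hpow n)
  rw [Submodule.eq_top_iff']
  intro f
  have hf : f ∈ (polynomialFunctions (Icc a b)).topologicalClosure := by
    rw [polynomialFunctions_closure_eq_top]; trivial
  rw [← SetLike.mem_coe, Subalgebra.topologicalClosure_coe] at hf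
  exact closure_minimal hpoly hS hf

noncomputable def polynomialFunctionsDegreeLT (n : ℕ) : Submodule ℝ (ℝ → ℝ) :=
  (degreeLT ℝ n).map (LinearMap.pi fun x => leval x)

lemma mem_polynomialFunctionsDegreeLT {n : ℕ} {ψ : ℝ → ℝ} :
    ψ ∈ polynomialFunctionsDegreeLT n ↔ ∃ p ∈ degreeLT ℝ n, ∀ x, p.eval x = ψ x := by
  simp [polynomialFunctionsDegreeLT, funext_iff]

lemma isClosed_polynomialFunctionsDegreeLT (n : ℕ) :
    IsClosed (polynomialFunctionsDegreeLT n : Set (ℝ → ℝ)) := by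
  unfold polynomialFunctionsDegreeLT
  exact Submodule.closed_of_finiteDimensional _

lemma degreeLT_le_map_derivative (n : ℕ) :
    degreeLT ℝ n ≤ (degreeLT ℝ (n + 1)).map derivative := by
  classical
  rw [degreeLT_eq_span_X_pow, Submodule.span_le, Finset.coe_image]
  rintro _ ⟨i, hi, rfl⟩
  refine ⟨C ((i : ℝ) + 1)⁻¹ * X ^ (i + 1), ?_, ?_⟩
  · rw [SetLike.mem_coe, mem_degreeLT]
    refine (degree_C_mul_X_pow_le _ _).trans_lt ?_
    exact_mod_cast Nat.succ_lt_succ (Finset.mem_range.1 hi)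
  · rw [derivative_C_mul_X_pow, Nat.add_sub_cancel, Nat.cast_succ,
      inv_mul_cancel₀ (by positivity), C_1, one_mul]

lemma mem_polynomialFunctionsDegreeLT_succ_of_deriv_mem {n : ℕ} {ψ : ℝ → ℝ}
    (hψ : Differentiable ℝ ψ) (h : deriv ψ ∈ polynomialFunctionsDegreeLT n) :
    ψ ∈ polynomialFunctionsDegreeLT (n + 1) := by
  obtain ⟨p, hp, hpψ⟩ := mem_polynomialFunctionsDegreeLT.1 h
  obtain ⟨q, hq, rfl⟩ := degreeLT_le_map_derivative n hp
  have hconst := is_const_of_deriv_eq_zero (hψ.sub q.differentiable) fun x => by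
    rw [deriv_sub (hψ x) q.differentiableAt, Polynomial.deriv, hpψ, sub_self]
  refine mem_polynomialFunctionsDegreeLT.2
    ⟨q + C (ψ 0 - q.eval 0), Submodule.add_mem _ hq ?_, fun x => ?_⟩
  · rw [mem_degreeLT]
    exact (degree_C_le).trans_lt (by exact_mod_cast Nat.succ_pos n)
  · have := hconst x 0
    simp only [Pi.sub_apply] at this
    simp [← this]

lemma mem_polynomialFunctionsDegreeLT_of_iteratedDeriv_eq_zero {n : ℕ} {ψ : ℝ → ℝ}
    (hψ : ContDiff ℝ n ψ) (h : iteratedDeriv n ψ = 0) : ψ ∈ polynomialFunctionsDegreeLT n := by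
  induction n generalizing ψ with
  | zero =>
    rw [iteratedDeriv_zero] at h
    exact h ▸ zero_mem _
  | succ n ih =>
    replace hψ := contDiff_succ_iff_deriv.1
      (by exact_mod_cast hψ : ContDiff ℝ ((n : WithTop ℕ∞) + 1) ψ)
    rw [iteratedDeriv_succ'] at h
    exact mem_polynomialFunctionsDegreeLT_succ_of_deriv_mem hψ.1 (ih hψ.2.2 h)

lemma exists_iteratedDeriv_mollify_ne_zero {σ : ℝ → ℝ} (hσ : Continuous σ)
    (hnp : ¬∃ p : ℝ[X], ∀ x, σ x = p.eval x) (n : ℕ) :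
    ∃ (φ : ContDiffBump (0 : ℝ)) (u : ℝ),
      iteratedDeriv n (φ.normed volume ⋆[ContinuousLinearMap.lsmul ℝ ℝ] σ) u ≠ 0 := by
  by_contra! hzero
  let φ (i : ℕ) : ContDiffBump (0 : ℝ) :=
    ⟨1 / (i + 1) / 2, 1 / (i + 1), by positivity, half_lt_self (by positivity)⟩
  have hlim :
      Tendsto (fun i => (φ i).normed volume ⋆[ContinuousLinearMap.lsmul ℝ ℝ] σ) atTop (𝓝 σ) :=
    tendsto_pi_nhds.2 <| ContDiffBump.convolution_tendsto_right_of_continuous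
      tendsto_one_div_add_atTop_nhds_zero_nat hσ
  have hmem : ∀ i,
      (φ i).normed volume ⋆[ContinuousLinearMap.lsmul ℝ ℝ] σ ∈ polynomialFunctionsDegreeLT n :=
    fun i => mem_polynomialFunctionsDegreeLT_of_iteratedDeriv_eq_zero
      ((φ i).hasCompactSupport_normed.contDiff_convolution_left _ (φ i).contDiff_normed
        hσ.locallyIntegrable)
      (funext (hzero (φ i)))
  obtain ⟨p, -, hp⟩ := mem_polynomialFunctionsDegreeLT.1
    ((isClosed_polynomialFunctionsDegreeLT n).mem_of_tendsto hlim (Eventually.of_forall hmem))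
  exact hnp ⟨p, fun x => (hp x).symm⟩

lemma ridgeSpan_le_of_eq_eval {σ : C(ℝ, ℝ)} {p : ℝ[X]} (hp : ∀ x, σ x = p.eval x) :
    ridgeSpan σ a b ≤
      (degreeLT ℝ (p.natDegree + 1)).map (toContinuousMapOnAlgHom (Icc a b)).toLinearMap := by
  rw [ridgeSpan, Submodule.span_le]
  rintro _ ⟨⟨l, t⟩, rfl⟩
  refine ⟨p.comp (C l * X + C t), ?_, ?_⟩
  · rw [SetLike.mem_coe, mem_degreeLT, degree_lt_iff_coeff_zero]
    intro m hm
    refine coeff_eq_zero_of_natDegree_lt (natDegree_comp_le.trans_lt ?_)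
    have := Nat.mul_le_mul_left p.natDegree (natDegree_linear_le (a := l) (b := t))
    omega
  · ext x
    simp [hp]

lemma topologicalClosure_ridgeSpan_ne_top (hab : a < b) {σ : C(ℝ, ℝ)} {p : ℝ[X]}
    (hp : ∀ x, σ x = p.eval x) : (ridgeSpan σ a b).topologicalClosure ≠ ⊤ := by
  intro htop
  have hle := (ridgeSpan σ a b).topologicalClosure_minimal (ridgeSpan_le_of_eq_eval hp)
    (Submodule.closed_of_finiteDimensional _)
  rw [htop, top_le_iff] at hle
  obtain ⟨q, hq, hqX⟩ : (X ^ (p.natDegree + 1)).toContinuousMapOn (Icc a b) ∈ _ :=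
    hle ▸ Submodule.mem_top
  have hqX' : q = X ^ (p.natDegree + 1) := eq_of_infinite_eval_eq _ _ <|
    (Icc_infinite hab).mono fun x hx => by simpa using congr($hqX ⟨x, hx⟩)
  rw [hqX', SetLike.mem_coe, mem_degreeLT, degree_X_pow] at hq
  exact lt_irrefl _ (by exact_mod_cast hq)

end TauberWiener

open TauberWiener

theorem isTauberWiener_iff_not_polynomial_general
    (σ : ℝ → ℝ) (hcont : Continuous σ) :
    IsTauberWiener σ ↔ ¬∃ p : Polynomial ℝ, ∀ x : ℝ, σ x = p.eval x := by
  rw [show IsTauberWiener σ ↔ IsTauberWiener (⟨σ, hcont⟩ : C(ℝ, ℝ)) from Iff.rfl,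
    isTauberWiener_iff]
  constructor
  · rintro hdense ⟨p, hp⟩
    exact topologicalClosure_ridgeSpan_ne_top zero_lt_one hp (hdense 0 1 zero_lt_one)
  · intro hnp a b _
    have hclosed := (ridgeSpan ⟨σ, hcont⟩ a b).isClosed_topologicalClosure
    refine eq_top_of_pow_mem hclosed fun n => ?_
    obtain ⟨φ, u, hu⟩ := exists_iteratedDeriv_mollify_ne_zero hcont hnp n
    exact pow_mem_of_iteratedDeriv_ne_zero hclosed
      (fun l t => Submodule.le_topologicalClosure _ (ridge_mem_ridgeSpan _ l t)) φ hu

/-- **Sufficient condition for Tauber–Wiener functions** (Chen & Chen).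
If `σ : ℝ → ℝ` is continuous of at most polynomial growth (hence a tempered
distribution on `ℝ`), then `σ` is Tauber–Wiener if and only if `σ` is not a
polynomial. -/
theorem isTauberWiener_iff_not_polynomial
    (σ : ℝ → ℝ) (hcont : Continuous σ)
    (C : ℝ) (hC : 0 < C) (k : ℕ) (hgrowth : ∀ x : ℝ, |σ x| ≤ C * (1 + |x|) ^ k) :
    IsTauberWiener σ ↔ ¬∃ p : Polynomial ℝ, ∀ x : ℝ, σ x = p.eval x :=
  isTauberWiener_iff_not_polynomial_general σ hcont
end

section
/- The hyperbolic tangent function tanh : ℝ → ℝ and the ReLU function x ↦ max(x, 0) are both Tauber–Wiener functions; that is, for every pair of reals a < b, the finite linear combinations x ↦ Σ_{i=1}^N c_i tanh(λ_i x + θ_i) (respectively x ↦ Σ_{i=1}^N c_i max(λ_i x + θ_i, 0)) with c_i, λ_i, θ_i ∈ ℝ are dense in C([a,b]) with the sup-norm. -/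
open Set Filter Topology

def ridgeSpan (σ : ℝ → ℝ) : Submodule ℝ (ℝ → ℝ) :=
  Submodule.span ℝ (Set.range fun p : ℝ × ℝ => fun x => σ (p.1 * x + p.2))

section RidgeSpan

variable {σ τ : ℝ → ℝ}

theorem ridge_mem_ridgeSpan (σ : ℝ → ℝ) (l t : ℝ) : (fun x => σ (l * x + t)) ∈ ridgeSpan σ :=
  Submodule.subset_span ⟨(l, t), rfl⟩

theorem const_mem_ridgeSpan {t : ℝ} (ht : σ t ≠ 0) (c : ℝ) : (fun _ => c) ∈ ridgeSpan σ := by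
  have : (fun _ : ℝ => c) = (c / σ t) • fun x => σ (0 * x + t) := by
    funext x
    simp [ht]
  rw [this]
  exact Submodule.smul_mem _ _ (ridge_mem_ridgeSpan σ 0 t)

theorem ridgeSpan_le (h : ∀ l t, (fun x => τ (l * x + t)) ∈ ridgeSpan σ) :
    ridgeSpan τ ≤ ridgeSpan σ :=
  Submodule.span_le.2 <| by
    rintro _ ⟨⟨l, t⟩, rfl⟩
    exact h l t

theorem ridgeSpan_sub_shift_le (σ : ℝ → ℝ) :
    ridgeSpan (fun x => σ (x + 1) - σ x) ≤ ridgeSpan σ :=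
  ridgeSpan_le fun l t => by
    have : (fun x => σ (l * x + t + 1) - σ (l * x + t)) =
        (fun x => σ (l * x + (t + 1))) - fun x => σ (l * x + t) := by
      funext x
      simp [add_assoc]
    exact this ▸ sub_mem (ridge_mem_ridgeSpan σ l (t + 1)) (ridge_mem_ridgeSpan σ l t)

theorem exists_sum_eq_of_mem_ridgeSpan {F : ℝ → ℝ} (hF : F ∈ ridgeSpan σ) :
    ∃ (N : ℕ) (c lam θ : Fin N → ℝ), ∀ x, F x = ∑ i, c i * σ (lam i * x + θ i) := by
  obtain ⟨N, c, g, rfl⟩ := Submodule.mem_span_set'.1 hF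
  choose p hp using fun i => (g i).2
  refine ⟨N, c, fun i => (p i).1, fun i => (p i).2, fun x => ?_⟩
  simp [Finset.sum_apply, ← hp]

theorem isTauberWiener_of_exists_mem_ridgeSpan
    (h : ∀ a b, a < b → ∀ f, ContinuousOn f (Icc a b) → ∀ ε > 0,
      ∃ F ∈ ridgeSpan σ, ∀ x ∈ Icc a b, |f x - F x| < ε) :
    IsTauberWiener σ := by
  intro a b hab f hf ε hε
  obtain ⟨F, hF, hfF⟩ := h a b hab f hf ε hε
  obtain ⟨N, c, lam, θ, hrep⟩ := exists_sum_eq_of_mem_ridgeSpan hF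
  exact ⟨N, c, lam, θ, fun x hx => hrep x ▸ hfF x hx⟩

end RidgeSpan

structure IsApproxStep (η s t : ℝ) (g : ℝ → ℝ) : Prop where
  mem_Icc : ∀ x, g x ∈ Icc 0 1
  le_of_le : ∀ x ≤ s, g x ≤ η
  ge_of_ge : ∀ x, t ≤ x → 1 - η ≤ g x

def HasApproxSteps (σ : ℝ → ℝ) : Prop :=
  ∀ s t η, s < t → 0 < η → ∃ g ∈ ridgeSpan σ, IsApproxStep η s t g

namespace HasApproxSteps

variable {σ τ : ℝ → ℝ}

theorem mono (h : HasApproxSteps τ) (hle : ridgeSpan τ ≤ ridgeSpan σ) : HasApproxSteps σ :=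
  fun s t η hst hη => (h s t η hst hη).imp fun _ ⟨hg, hstep⟩ => ⟨hle hg, hstep⟩

theorem exists_ne_zero (h : HasApproxSteps σ) : ∃ t, σ t ≠ 0 := by
  by_contra! h0
  obtain ⟨g, hg, hstep⟩ := h 0 1 (1 / 2) one_pos (by norm_num)
  have hbot : ridgeSpan σ = ⊥ :=
    Submodule.span_eq_bot.2 <| by
      rintro _ ⟨p, rfl⟩
      funext x
      exact h0 _
  rw [hbot, Submodule.mem_bot] at hg
  have := hstep.ge_of_ge 1 le_rfl
  norm_num [hg] at this

end HasApproxSteps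

theorem abs_sub_staircase_le {n m : ℕ} (hm : m ≤ n) {u w : ℕ → ℝ} {η ρ : ℝ} (hη : 0 ≤ η)
    (hρ : 0 ≤ ρ) (hu : ∀ j < n, |u (j + 1) - u j| ≤ ρ) (hw : ∀ j, w j ∈ Icc 0 1)
    (hw_lt : ∀ j < m, 1 - η ≤ w j) (hw_gt : ∀ j, m < j → w j ≤ η) :
    |u m - (u 0 + ∑ j ∈ Finset.range n, (u (j + 1) - u j) * w j)| ≤
      η * ∑ j ∈ Finset.range n, |u (j + 1) - u j| + ρ := by
  set Δ := fun j => u (j + 1) - u j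
  have htel : u m - u 0 = ∑ j ∈ Finset.range n, Δ j * if j < m then 1 else 0 := by
    simp only [mul_ite, mul_one, mul_zero, ← Finset.sum_filter]
    have hfilter : (Finset.range n).filter (· < m) = Finset.range m := by
      ext j
      simp only [Finset.mem_filter, Finset.mem_range]
      omega
    rw [hfilter, Finset.sum_range_sub]
  have hterm : ∀ j, |(if j < m then 1 else 0) - w j| ≤ η + if j = m then 1 else 0 := by
    intro j
    rcases lt_trichotomy j m with h | rfl | h
    · rw [if_pos h, if_neg h.ne, add_zero, abs_le]
      constructor <;> linarith [hw_lt j h, (hw j).2]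
    · rw [if_neg (lt_irrefl j), if_pos rfl, abs_le]
      constructor <;> linarith [(hw j).1, (hw j).2]
    · rw [if_neg h.not_gt, if_neg h.ne', add_zero, abs_le]
      constructor <;> linarith [hw_gt j h, (hw j).1]
  calc |u m - (u 0 + ∑ j ∈ Finset.range n, Δ j * w j)|
      = |∑ j ∈ Finset.range n, Δ j * ((if j < m then 1 else 0) - w j)| := by
        rw [sub_add_eq_sub_sub, htel, ← Finset.sum_sub_distrib]
        simp only [mul_sub]
    _ ≤ ∑ j ∈ Finset.range n, |Δ j| * (η + if j = m then 1 else 0) := by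
        refine (Finset.abs_sum_le_sum_abs _ _).trans (Finset.sum_le_sum fun j _ => ?_)
        rw [abs_mul]
        exact mul_le_mul_of_nonneg_left (hterm j) (abs_nonneg _)
    _ = η * ∑ j ∈ Finset.range n, |Δ j| + if m ∈ Finset.range n then |Δ m| else 0 := by
        simp only [mul_add, mul_ite, mul_one, mul_zero, Finset.sum_add_distrib,
          Finset.sum_ite_eq', Finset.sum_mul, mul_comm η]
    _ ≤ _ := by
        gcongr
        split_ifs with h
        exacts [hu m (Finset.mem_range.1 h), hρ]

theorem exists_nat_add_mul_le_lt {a h x : ℝ} (hh : 0 < h) (hx : a ≤ x) :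
    ∃ m : ℕ, a + m * h ≤ x ∧ x < a + (m + 1) * h := by
  have hxa : 0 ≤ (x - a) / h := div_nonneg (sub_nonneg.2 hx) hh.le
  refine ⟨⌊(x - a) / h⌋₊, ?_, ?_⟩
  · linarith [(le_div_iff₀ hh).1 (Nat.floor_le hxa)]
  · linarith [(div_lt_iff₀ hh).1 (Nat.lt_floor_add_one ((x - a) / h))]

theorem ContinuousOn.exists_grid {f : ℝ → ℝ} {a b : ℝ} (hab : a < b)
    (hf : ContinuousOn f (Icc a b)) {ε : ℝ} (hε : 0 < ε) :
    ∃ (n : ℕ) (t : ℕ → ℝ), StrictMono t ∧ t 0 = a ∧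
      (∀ j < n, |f (t (j + 1)) - f (t j)| < ε) ∧
      ∀ x ∈ Icc a b, ∃ m ≤ n, t m ≤ x ∧ x < t (m + 1) ∧ |f x - f (t m)| < ε := by
  obtain ⟨δ, hδ, hfδ⟩ :=
    Metric.uniformContinuousOn_iff.1 (isCompact_Icc.uniformContinuousOn_of_continuous hf) ε hε
  obtain ⟨n, hn⟩ := exists_nat_gt ((b - a) / δ)
  have hn0 : (0 : ℝ) < n := lt_of_le_of_lt (div_nonneg (sub_nonneg.2 hab.le) hδ.le) hn
  set h := (b - a) / n
  have hh : 0 < h := div_pos (sub_pos.2 hab) hn0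
  have hf_close : ∀ x ∈ Icc a b, ∀ y ∈ Icc a b, |x - y| ≤ h → |f x - f y| < ε := by
    refine fun x hx y hy hxy => hfδ x hx y hy (hxy.trans_lt ?_)
    rw [div_lt_iff₀ hn0]
    rwa [div_lt_iff₀ hδ, mul_comm] at hn
  set t : ℕ → ℝ := fun j => a + j * h
  have ht : StrictMono t := fun i j hij => by
    simp only [t]
    gcongr
  have htn : t n = b := by
    simp only [t, h]
    field_simp
    ring
  have ht_mem : ∀ j ≤ n, t j ∈ Icc a b := fun j hj =>
    ⟨le_add_of_nonneg_right (by positivity), htn ▸ ht.monotone hj⟩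
  refine ⟨n, t, ht, by simp [t], fun j hj => ?_, fun x hx => ?_⟩
  · refine hf_close _ (ht_mem _ hj) _ (ht_mem _ hj.le) ?_
    simp only [t]
    push_cast
    rw [show a + (j + 1) * h - (a + j * h) = h by ring, abs_of_pos hh]
  · obtain ⟨m, htm, hxt⟩ := exists_nat_add_mul_le_lt hh hx.1
    have hmn : m ≤ n := ht.le_iff_le.1 (htm.trans (htn ▸ hx.2))
    refine ⟨m, hmn, htm, by simpa [t] using hxt, hf_close _ hx _ (ht_mem m hmn) ?_⟩
    rw [abs_of_nonneg (sub_nonneg.2 htm)]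
    linarith

theorem HasApproxSteps.isTauberWiener {σ : ℝ → ℝ} (hσ : HasApproxSteps σ) :
    IsTauberWiener σ := by
  obtain ⟨t₀, ht₀⟩ := hσ.exists_ne_zero
  refine isTauberWiener_of_exists_mem_ridgeSpan fun a b hab f hf ε hε => ?_
  obtain ⟨n, t, ht, ht0, hΔ, hgrid⟩ := hf.exists_grid hab (ε := ε / 3) (by positivity)
  set Δ := fun j => f (t (j + 1)) - f (t j)
  set E := ∑ j ∈ Finset.range n, |Δ j|
  have hE : 0 ≤ E := Finset.sum_nonneg fun j _ => abs_nonneg _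
  set η := ε / (3 * (E + 1))
  have hη : 0 < η := by positivity
  have hηE : η * E ≤ ε / 3 := by
    rw [div_mul_eq_mul_div, div_le_div_iff₀ (by positivity) (by norm_num)]
    nlinarith
  choose g hg hstep using fun j => hσ (t j) (t (j + 1)) η (ht (Nat.lt_succ_self j)) hη
  refine ⟨fun x => f a + ∑ j ∈ Finset.range n, Δ j * g j x, ?_, fun x hx => ?_⟩
  · have : (fun x => f a + ∑ j ∈ Finset.range n, Δ j * g j x) =
        (fun _ => f a) + ∑ j ∈ Finset.range n, Δ j • g j := by
      funext x
      simp [Finset.sum_apply]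
    rw [this]
    exact add_mem (const_mem_ridgeSpan ht₀ _)
      (Submodule.sum_mem _ fun j _ => Submodule.smul_mem _ _ (hg j))
  · obtain ⟨m, hmn, htm, hxt, hfx⟩ := hgrid x hx
    have hstair := abs_sub_staircase_le hmn (u := f ∘ t) (w := fun j => g j x) hη.le
      (by positivity) (fun j hj => (hΔ j hj).le) (fun j => (hstep j).mem_Icc x)
      (fun j hj => (hstep j).ge_of_ge x ((ht.monotone hj).trans htm))
      (fun j hj => (hstep j).le_of_le x (hxt.le.trans (ht.monotone hj)))
    simp only [Function.comp_apply, ht0] at hstair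
    calc |f x - (f a + ∑ j ∈ Finset.range n, Δ j * g j x)|
        ≤ |f x - f (t m)| + |f (t m) - (f a + ∑ j ∈ Finset.range n, Δ j * g j x)| :=
          abs_sub_le _ _ _
      _ < ε / 3 + (η * E + ε / 3) := add_lt_add_of_lt_of_le hfx hstair
      _ ≤ ε := by linarith

theorem Monotone.hasApproxSteps {σ : ℝ → ℝ} {l L : ℝ} (hσ : Monotone σ)
    (hl : Tendsto σ atBot (𝓝 l)) (hL : Tendsto σ atTop (𝓝 L)) (hlL : l < L) :
    HasApproxSteps σ := by
  intro s t η hst hη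
  have hκ : 0 < η * (L - l) := mul_pos hη (sub_pos.2 hlL)
  obtain ⟨A, hA⟩ := eventually_atBot.1 (hl (Iio_mem_nhds (lt_add_of_pos_right l hκ)))
  obtain ⟨B, hB⟩ := eventually_atTop.1 (hL (Ioi_mem_nhds (sub_lt_self L hκ)))
  -- the ridge `y ↦ k * y + (A - k * s)` maps `[s, t]` onto `[A, max B (A + 1)]`
  set k := (max B (A + 1) - A) / (t - s)
  have hk : 0 < k := div_pos (by linarith [le_max_right B (A + 1)]) (sub_pos.2 hst)
  have hkt : k * t + (A - k * s) = max B (A + 1) := by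
    simp only [k]
    field_simp [(sub_pos.2 hst).ne']
    ring
  obtain ⟨y₀, hy₀⟩ : ∃ y, σ y ≠ 0 := by
    rcases eq_or_ne L 0 with hL0 | hL0
    · exact (hl.eventually_ne (hL0 ▸ hlL.ne)).exists
    · exact (hL.eventually_ne hL0).exists
  have hlL' : 0 < L - l := sub_pos.2 hlL
  refine ⟨fun x => (σ (k * x + (A - k * s)) - l) / (L - l), ?mem,
    ⟨fun x => ⟨?nonneg, ?le_one⟩, ?left, ?right⟩⟩
  case mem =>
    have : (fun x => (σ (k * x + (A - k * s)) - l) / (L - l)) =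
        (L - l)⁻¹ • ((fun x => σ (k * x + (A - k * s))) - fun _ => l) := by
      funext x
      simp [div_eq_inv_mul]
    rw [this]
    exact Submodule.smul_mem _ _
      (sub_mem (ridge_mem_ridgeSpan σ k _) (const_mem_ridgeSpan hy₀ l))
  case nonneg => exact div_nonneg (sub_nonneg.2 (hσ.le_of_tendsto hl _)) hlL'.le
  case le_one =>
    exact (div_le_one hlL').2 (by linarith [hσ.ge_of_tendsto hL (k * x + (A - k * s))])
  case left =>
    intro x hx
    have : σ _ < l + η * (L - l) := hA _ (show k * x + (A - k * s) ≤ A by nlinarith)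
    rw [div_le_iff₀ hlL']
    linarith
  case right =>
    intro x hx
    have : L - η * (L - l) < σ _ :=
      hB _ (show B ≤ k * x + (A - k * s) by nlinarith [le_max_left B (A + 1)])
    rw [le_div_iff₀ hlL']
    linarith

theorem Real.monotone_tanh : Monotone Real.tanh := fun x y hxy => by
  by_contra! h
  have := Real.artanh_lt_artanh (Real.neg_one_lt_tanh y) (Real.tanh_lt_one x) h
  rw [Real.artanh_tanh, Real.artanh_tanh] at this
  linarith

theorem Real.tanh_eq_one_sub (x : ℝ) : Real.tanh x = 1 - 2 / (Real.exp (2 * x) + 1) := by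
  rw [Real.tanh_eq, two_mul, Real.exp_add, Real.exp_neg]
  field_simp
  ring

theorem Real.tendsto_tanh_atTop : Tendsto Real.tanh atTop (𝓝 1) := by
  have hexp : Tendsto (fun x => Real.exp (2 * x) + 1) atTop atTop :=
    tendsto_atTop_add_const_right _ _
      (Real.tendsto_exp_atTop.comp (tendsto_id.const_mul_atTop two_pos))
  have := (hexp.inv_tendsto_atTop.const_mul 2).const_sub 1
  simpa [funext Real.tanh_eq_one_sub, div_eq_mul_inv] using this

theorem Real.tendsto_tanh_atBot : Tendsto Real.tanh atBot (𝓝 (-1)) := by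
  have := (Real.tendsto_tanh_atTop.comp tendsto_neg_atBot_atTop).neg
  simpa [Function.comp_def] using this

theorem monotone_relu_sub_shift : Monotone fun x : ℝ => max (x + 1) 0 - max x 0 := by
  intro x y hxy
  simp only
  grind

theorem tendsto_relu_sub_shift_atBot :
    Tendsto (fun x : ℝ => max (x + 1) 0 - max x 0) atBot (𝓝 0) :=
  tendsto_const_nhds.congr' <| (eventually_le_atBot (-1)).mono fun x hx => by
    simp [max_eq_right (show x + 1 ≤ 0 by linarith), max_eq_right (show x ≤ 0 by linarith)]

theorem tendsto_relu_sub_shift_atTop :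
    Tendsto (fun x : ℝ => max (x + 1) 0 - max x 0) atTop (𝓝 1) :=
  tendsto_const_nhds.congr' <| (eventually_ge_atTop 0).mono fun x hx => by
    simp [max_eq_left hx, max_eq_left (show 0 ≤ x + 1 by linarith)]

/-- The hyperbolic tangent and the ReLU function `x ↦ max(x, 0)` are both
Tauber–Wiener functions. -/
theorem tanh_and_relu_isTauberWiener :
    IsTauberWiener Real.tanh ∧ IsTauberWiener (fun x : ℝ => max x 0) :=
  ⟨(Real.monotone_tanh.hasApproxSteps Real.tendsto_tanh_atBot Real.tendsto_tanh_atTop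
      (by norm_num)).isTauberWiener,
    ((monotone_relu_sub_shift.hasApproxSteps tendsto_relu_sub_shift_atBot
      tendsto_relu_sub_shift_atTop one_pos).mono
      (ridgeSpan_sub_shift_le fun x => max x 0)).isTauberWiener⟩
end

section
/- Let a < b be reals, let V be a compact subset of C([a,b]) with the sup-norm, and for each positive integer m let L_m be the piecewise linear interpolation operator at the uniform nodes x_j = a + j(b−a)/m. Set U_m = L_m(V), W_m = V ∪ U_m, and W = ⋃_{i=1}^∞ W_i. Then W is uniformly bounded and equicontinuous: there is M such that |u(x)| ≤ M for all u ∈ W and x ∈ [a,b], and for every ε > 0 there is δ > 0 such that |x − y| < δ implies |u(x) − u(y)| < ε for all u ∈ W and all x, y ∈ [a,b]. In particular, W is pre-compact (has compact closure) in C([a,b]). -/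
/-!
Each value `L_m u x` is a convex combination, with weights independent of `u`, of two values
of `u` at points within `(b - a)/m` of `x`. Hence every `L_m` is `1`-Lipschitz, and `L_m → id`
uniformly on `V`, because a compact subset of `C([a,b])` is uniformly equicontinuous. So for
every `ε` the set `W` lies within `ε` of the compact set `V ∪ L_1(V) ∪ ⋯ ∪ L_N(V)`; thus `W` is
totally bounded and its closure is compact. A compact subset of `C([a,b])` is bounded and
uniformly equicontinuous, and so is its subset `W`.
-/

/-- The uniform nodes `x_j = a + j(b−a)/m`, `j = 0, …, m`, of `[a,b]`. -/
noncomputable def node (a b : ℝ) (m j : ℕ) : ℝ := a + j * (b - a) / m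

/-- `L` is the piecewise linear interpolation operator on `C([a,b])` at the uniform
nodes `x_j = a + j(b−a)/m`: for `x ∈ [x_j, x_{j+1}]`, `j = 0, …, m−1`,
`(L u)(x) = u(x_j) + ((u(x_{j+1}) − u(x_j))/(x_{j+1} − x_j))(x − x_j)`. -/
def IsLinInterp (a b : ℝ) (hab : a ≤ b) (m : ℕ)
    (L : C(Set.Icc a b, ℝ) → C(Set.Icc a b, ℝ)) : Prop :=
  ∀ u : C(Set.Icc a b, ℝ), ∀ j : ℕ, j < m →
    ∀ x : Set.Icc a b, node a b m j ≤ (x : ℝ) → (x : ℝ) ≤ node a b m (j + 1) →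
      L u x = u (Set.projIcc a b hab (node a b m j)) +
        (u (Set.projIcc a b hab (node a b m (j + 1))) -
            u (Set.projIcc a b hab (node a b m j))) /
          (node a b m (j + 1) - node a b m j) * ((x : ℝ) - node a b m j)

open Set Filter Topology

lemma abs_convexComb_le_max {s : ℝ} (hs : s ∈ Icc 0 1) (A B : ℝ) :
    |(1 - s) * A + s * B| ≤ max |A| |B| := by
  obtain ⟨hs0, hs1⟩ := hs
  calc |(1 - s) * A + s * B| ≤ (1 - s) * |A| + s * |B| := by
        simpa only [abs_mul, abs_of_nonneg hs0, abs_of_nonneg (sub_nonneg.2 hs1)]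
          using abs_add_le ((1 - s) * A) (s * B)
    _ ≤ max |A| |B| := by nlinarith [le_max_left |A| |B|, le_max_right |A| |B|]

lemma node_zero (a b : ℝ) (m : ℕ) : node a b m 0 = a := by
  simp [node]

lemma node_self (a b : ℝ) {m : ℕ} (hm : m ≠ 0) : node a b m m = b := by
  simp only [node]
  field_simp
  ring

lemma node_succ_sub (a b : ℝ) (m j : ℕ) : node a b m (j + 1) - node a b m j = (b - a) / m := by
  simp only [node]
  push_cast
  ring

lemma exists_node_le_le {a b : ℝ} {m : ℕ} (hm : 0 < m) {x : ℝ} (hx : x ∈ Icc a b) :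
    ∃ j < m, node a b m j ≤ x ∧ x ≤ node a b m (j + 1) := by
  classical
  have hlast : x ≤ node a b m (m - 1 + 1) := by
    rw [Nat.sub_one_add_one hm.ne', node_self a b hm.ne']
    exact hx.2
  have hex : ∃ j, x ≤ node a b m (j + 1) := ⟨m - 1, hlast⟩
  refine ⟨Nat.find hex, (Nat.find_min' hex hlast).trans_lt (Nat.sub_lt hm one_pos), ?_,
    Nat.find_spec hex⟩
  rcases h : Nat.find hex with _ | k
  · rw [node_zero]
    exact hx.1
  · exact (not_le.1 (Nat.find_min hex (h ▸ k.lt_succ_self))).le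

namespace IsLinInterp

variable {a b : ℝ} {hab : a ≤ b} {m : ℕ} {L : C(Icc a b, ℝ) → C(Icc a b, ℝ)}

lemma exists_apply_eq_convexComb (hL : IsLinInterp a b hab m L) (hm : 0 < m) (x : Icc a b) :
    ∃ p q : Icc a b, dist p x ≤ (b - a) / m ∧ dist q x ≤ (b - a) / m ∧
      ∃ s ∈ Icc (0 : ℝ) 1, ∀ u, L u x = (1 - s) * u p + s * u q := by
  obtain ⟨j, hj, hjx, hxj⟩ := exists_node_le_le hm x.2
  have hstep := node_succ_sub a b m j
  have hproj : ∀ t, dist (projIcc a b hab t) x ≤ |t - x| := fun t => by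
    simpa [projIcc_val, Real.dist_eq] using (LipschitzWith.projIcc hab).dist_le_mul t x
  refine ⟨projIcc a b hab (node a b m j), projIcc a b hab (node a b m (j + 1)), ?_, ?_,
    (x - node a b m j) / (node a b m (j + 1) - node a b m j),
    ⟨div_nonneg (by linarith) (by linarith), div_le_one_of_le₀ (by linarith) (by linarith)⟩,
    fun u => by rw [hL u j hj x hjx hxj]; ring⟩
  · exact (hproj _).trans (by rw [abs_le]; constructor <;> linarith)
  · exact (hproj _).trans (by rw [abs_le]; constructor <;> linarith)

lemma lipschitzWith_one (hL : IsLinInterp a b hab m L) (hm : 0 < m) : LipschitzWith 1 L := by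
  refine LipschitzWith.of_dist_le_mul fun u v => ?_
  rw [NNReal.coe_one, one_mul, ContinuousMap.dist_le dist_nonneg]
  intro x
  obtain ⟨p, q, -, -, s, hs, hLx⟩ := hL.exists_apply_eq_convexComb hm x
  rw [hLx, hLx, Real.dist_eq]
  calc |(1 - s) * u p + s * u q - ((1 - s) * v p + s * v q)|
      = |(1 - s) * (u p - v p) + s * (u q - v q)| := by ring_nf
    _ ≤ max |u p - v p| |u q - v q| := abs_convexComb_le_max hs _ _
    _ ≤ dist u v := max_le (ContinuousMap.dist_apply_le_dist (f := u) (g := v) p)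
      (ContinuousMap.dist_apply_le_dist (f := u) (g := v) q)

lemma dist_le_of_forall_dist_le (hL : IsLinInterp a b hab m L) (hm : 0 < m)
    {u : C(Icc a b, ℝ)} {ε : ℝ} (hε : 0 ≤ ε)
    (hu : ∀ p x : Icc a b, dist p x ≤ (b - a) / m → dist (u p) (u x) ≤ ε) :
    dist (L u) u ≤ ε := by
  rw [ContinuousMap.dist_le hε]
  intro x
  obtain ⟨p, q, hp, hq, s, hs, hLx⟩ := hL.exists_apply_eq_convexComb hm x
  rw [hLx, Real.dist_eq]
  calc |(1 - s) * u p + s * u q - u x| = |(1 - s) * (u p - u x) + s * (u q - u x)| := by ring_nf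
    _ ≤ max |u p - u x| |u q - u x| := abs_convexComb_le_max hs _ _
    _ ≤ ε := max_le (hu p x hp) (hu q x hq)

end IsLinInterp

lemma ContinuousMap.uniformEquicontinuous_of_isCompact {X Y : Type*} [PseudoMetricSpace X]
    [CompactSpace X] [PseudoMetricSpace Y] {K : Set C(X, Y)} (hK : IsCompact K) :
    UniformEquicontinuous ((↑) : K → X → Y) := by
  rw [Metric.uniformEquicontinuous_iff]
  intro ε hε
  have heval : UniformContinuousOn (fun p : C(X, Y) × X => p.1 p.2) (K ×ˢ univ) :=
    (hK.prod isCompact_univ).uniformContinuousOn_of_continuous continuous_eval.continuousOn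
  obtain ⟨δ, hδ, h⟩ := Metric.uniformContinuousOn_iff.1 heval ε hε
  refine ⟨δ, hδ, fun x y hxy u => h (u, x) ⟨u.2, trivial⟩ (u, y) ⟨u.2, trivial⟩ ?_⟩
  simpa [Prod.dist_eq] using hxy

lemma tendstoUniformlyOn_of_isLinInterp {a b : ℝ} {hab : a ≤ b}
    {L : ℕ → C(Icc a b, ℝ) → C(Icc a b, ℝ)}
    (hL : ∀ m, 0 < m → IsLinInterp a b hab m (L m))
    {V : Set C(Icc a b, ℝ)} (hV : IsCompact V) :
    TendstoUniformlyOn L id atTop V := by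
  rw [Metric.tendstoUniformlyOn_iff]
  intro ε hε
  obtain ⟨δ, hδ, hVδ⟩ := Metric.uniformEquicontinuous_iff.1
    (ContinuousMap.uniformEquicontinuous_of_isCompact hV) (ε / 2) (half_pos hε)
  have hmesh : ∀ᶠ m : ℕ in atTop, (b - a) / m < δ :=
    (tendsto_const_div_atTop_nhds_zero_nat (b - a)).eventually (gt_mem_nhds hδ)
  filter_upwards [hmesh, eventually_gt_atTop 0] with m hm hm0 u hu
  rw [id, dist_comm]
  calc dist (L m u) u ≤ ε / 2 := (hL m hm0).dist_le_of_forall_dist_le hm0 (half_pos hε).le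
        fun p x hpx => (hVδ p x (hpx.trans_lt hm) ⟨u, hu⟩).le
    _ < ε := half_lt_self hε

lemma totallyBounded_union_iUnion_image {α : Type*} [PseudoMetricSpace α] {F : ℕ → α → α}
    {s : Set α} (hs : IsCompact s) (hF : ∀ n, ContinuousOn (F n) s)
    (hlim : TendstoUniformlyOn F id atTop s) :
    TotallyBounded (s ∪ ⋃ n, F n '' s) := by
  rw [Metric.totallyBounded_iff]
  intro ε hε
  obtain ⟨N, hN⟩ :=
    eventually_atTop.1 (Metric.tendstoUniformlyOn_iff.1 hlim (ε / 2) (half_pos hε))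
  have hK : IsCompact (s ∪ ⋃ n ∈ Iio N, F n '' s) :=
    hs.union ((finite_Iio N).isCompact_biUnion fun n _ => hs.image_of_continuousOn (hF n))
  obtain ⟨t, ht, hKt⟩ := Metric.totallyBounded_iff.1 hK.totallyBounded (ε / 2) (half_pos hε)
  have hball : ⋃ y ∈ t, Metric.ball y (ε / 2) ⊆ ⋃ y ∈ t, Metric.ball y ε :=
    biUnion_mono subset_rfl fun y _ => Metric.ball_subset_ball (half_le_self hε.le)
  refine ⟨t, ht, ?_⟩
  rintro z (hz | hz)
  · exact hball (hKt (Or.inl hz))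
  obtain ⟨n, x, hx, rfl⟩ := mem_iUnion.1 hz
  rcases lt_or_ge n N with hn | hn
  · exact hball (hKt (Or.inr (mem_biUnion hn ⟨x, hx, rfl⟩)))
  obtain ⟨y, hy, hxy⟩ := mem_iUnion₂.1 (hKt (Or.inl hx))
  refine mem_iUnion₂.2 ⟨y, hy, ?_⟩
  have hFx : dist (F n x) x < ε / 2 := by rw [dist_comm]; exact hN n hn x hx
  rw [Metric.mem_ball] at hxy ⊢
  linarith [dist_triangle (F n x) x y]

/-- With `U_m = L_m(V)`, `W_m = V ∪ U_m` and `W = ⋃_{i=1}^∞ W_i`, the set `W` is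
uniformly bounded and equicontinuous; in particular `W` is pre-compact (has compact
closure) in `C([a,b])`. -/
theorem W_uniformly_bounded_equicontinuous_precompact (a b : ℝ) (hab : a < b)
    (V : Set C(Set.Icc a b, ℝ)) (hV : IsCompact V)
    (L : ℕ → C(Set.Icc a b, ℝ) → C(Set.Icc a b, ℝ))
    (hL : ∀ i : ℕ, 0 < i → IsLinInterp a b hab.le i (L i))
    (W : Set C(Set.Icc a b, ℝ))
    (hW : W = ⋃ i ∈ {i : ℕ | 1 ≤ i}, (V ∪ (L i) '' V)) :
    (∃ M : ℝ, ∀ u ∈ W, ∀ x : Set.Icc a b, |u x| ≤ M) ∧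
    (∀ ε : ℝ, 0 < ε → ∃ δ : ℝ, 0 < δ ∧
      ∀ u ∈ W, ∀ x y : Set.Icc a b, |(x : ℝ) - (y : ℝ)| < δ → |u x - u y| < ε) ∧
    IsCompact (closure W) := by
  have hcont : ∀ n : ℕ, ContinuousOn (L (n + 1)) V := fun n =>
    ((hL (n + 1) n.succ_pos).lipschitzWith_one n.succ_pos).continuous.continuousOn
  have hlim : TendstoUniformlyOn (fun n => L (n + 1)) id atTop V := fun d hd =>
    (tendsto_add_atTop_nat 1).eventually (tendstoUniformlyOn_of_isLinInterp hL hV d hd)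
  have hWsub : W ⊆ V ∪ ⋃ n, L (n + 1) '' V := by
    rw [hW]
    refine iUnion₂_subset fun i (hi : 1 ≤ i) => union_subset_union_right V ?_
    obtain ⟨n, rfl⟩ := Nat.exists_eq_add_of_le' hi
    exact subset_iUnion (fun n => L (n + 1) '' V) n
  have hcpt : IsCompact (closure W) :=
    ((totallyBounded_union_iUnion_image hV hcont hlim).subset hWsub).closure.isCompact_of_isClosed
      isClosed_closure
  refine ⟨?_, fun ε hε => ?_, hcpt⟩
  · obtain ⟨M, hM⟩ := (hcpt.isBounded.subset subset_closure).exists_norm_le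
    exact ⟨M, fun u hu x => (u.norm_coe_le_norm x).trans (hM u hu)⟩
  · obtain ⟨δ, hδ, h⟩ := Metric.uniformEquicontinuous_iff.1
      (ContinuousMap.uniformEquicontinuous_of_isCompact hcpt) ε hε
    exact ⟨δ, hδ, fun u hu x y hxy => h x y hxy ⟨u, subset_closure hu⟩⟩
end

section
/- Let t_i < t_{i+1} be reals with h = t_{i+1} − t_i, let l > 0, and let Π₁ denote the linear interpolation operator on [t_i, t_{i+1}]. Then for every t ∈ [t_i, t_{i+1}], 2√π ∫_0^∞ (cos(λt/l) − (Π₁ cos(λ·/l))(t))² e^{−λ²/4} dλ + 2√π ∫_0^∞ (sin(λt/l) − (Π₁ sin(λ·/l))(t))² e^{−λ²/4} dλ ≤ 24π · h⁴/l⁴. -/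
/-!
The derivatives of `cos (λ s / l)` and `sin (λ s / l)` are `(λ / l)²`-Lipschitz, so by first-order
Taylor expansion about `t` their linear interpolation error at `t` is at most
`(λ / l)² (t - t₁)(t₂ - t) ≤ λ² h² / (4 l²)`. Squaring and integrating against `e^{-λ²/4}` brings
in the fourth Gaussian moment `∫₀^∞ λ⁴ e^{-λ²/4} dλ = 12 √π`, and the left-hand side is in fact at
most `3π h⁴ / l⁴`.
-/

open MeasureTheory Real Set

/-- The paper's `Π₁ f` on `[t₁, t₂]`. -/
noncomputable def linInterp (f : ℝ → ℝ) (t₁ t₂ t : ℝ) : ℝ :=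
  f t₁ + (f t₂ - f t₁) / (t₂ - t₁) * (t - t₁)

section Interpolation

variable {f f' : ℝ → ℝ} {K : ℝ}

theorem abs_sub_sub_deriv_mul_le (hf : ∀ x, HasDerivAt f (f' x) x)
    (hf' : ∀ x y, |f' x - f' y| ≤ K * |x - y|) (a b : ℝ) :
    |f a - f b - f' b * (a - b)| ≤ K * (a - b) ^ 2 := by
  have hK : 0 ≤ K := by simpa using (abs_nonneg _).trans (hf' (b + 1) b)
  have hg : ∀ x ∈ uIcc b a, HasDerivWithinAt (fun y => f y - f' b * y) (f' x - f' b)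
      (uIcc b a) x := fun x _ =>
    ((hf x).sub ((hasDerivAt_id x).const_mul (f' b) |>.congr_deriv (mul_one _))).hasDerivWithinAt
  have hbound : ∀ x ∈ uIcc b a, ‖f' x - f' b‖ ≤ K * |a - b| := fun x hx =>
    (hf' x b).trans (mul_le_mul_of_nonneg_left (abs_sub_left_of_mem_uIcc hx) hK)
  have hmvt := (convex_uIcc b a).norm_image_sub_le_of_norm_hasDerivWithin_le hg hbound
    left_mem_uIcc right_mem_uIcc
  calc |f a - f b - f' b * (a - b)| = ‖(f a - f' b * a) - (f b - f' b * b)‖ := by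
        rw [Real.norm_eq_abs]; ring_nf
    _ ≤ K * |a - b| * ‖a - b‖ := hmvt
    _ = K * (a - b) ^ 2 := by rw [Real.norm_eq_abs, mul_assoc, ← abs_mul, ← sq, abs_sq]

/-- The interpolation error is minus a convex combination of the first-order Taylor remainders
at `t₁` and `t₂` about `t`. -/
theorem abs_sub_linInterp_le (hf : ∀ x, HasDerivAt f (f' x) x)
    (hf' : ∀ x y, |f' x - f' y| ≤ K * |x - y|) {t₁ t₂ t : ℝ} (hlt : t₁ < t₂)
    (ht : t ∈ Icc t₁ t₂) :
    |f t - linInterp f t₁ t₂ t| ≤ K * ((t - t₁) * (t₂ - t)) := by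
  obtain ⟨h₁, h₂⟩ := ht
  have hh : 0 < t₂ - t₁ := sub_pos.mpr hlt
  set R₁ := f t₁ - f t - f' t * (t₁ - t)
  set R₂ := f t₂ - f t - f' t * (t₂ - t)
  have hsplit : f t - linInterp f t₁ t₂ t =
      -((t₂ - t) / (t₂ - t₁) * R₁ + (t - t₁) / (t₂ - t₁) * R₂) := by
    unfold linInterp; field_simp; ring
  have hw₁ : 0 ≤ (t₂ - t) / (t₂ - t₁) := div_nonneg (by linarith) hh.le
  have hw₂ : 0 ≤ (t - t₁) / (t₂ - t₁) := div_nonneg (by linarith) hh.le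
  calc |f t - linInterp f t₁ t₂ t|
      ≤ (t₂ - t) / (t₂ - t₁) * |R₁| + (t - t₁) / (t₂ - t₁) * |R₂| := by
        rw [hsplit, abs_neg]
        refine (abs_add_le _ _).trans_eq ?_
        rw [abs_mul, abs_mul, abs_of_nonneg hw₁, abs_of_nonneg hw₂]
    _ ≤ (t₂ - t) / (t₂ - t₁) * (K * (t₁ - t) ^ 2) +
        (t - t₁) / (t₂ - t₁) * (K * (t₂ - t) ^ 2) := by
        gcongr
        · exact abs_sub_sub_deriv_mul_le hf hf' t₁ t
        · exact abs_sub_sub_deriv_mul_le hf hf' t₂ t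
    _ = K * ((t - t₁) * (t₂ - t)) := by field_simp; ring

end Interpolation

theorem abs_sub_linInterp_comp_mul_le {g g' : ℝ → ℝ} (hg : ∀ x, HasDerivAt g (g' x) x)
    (hg' : ∀ x y, |g' x - g' y| ≤ |x - y|) (ω : ℝ) {t₁ t₂ t : ℝ} (hlt : t₁ < t₂)
    (ht : t ∈ Icc t₁ t₂) :
    |g (ω * t) - linInterp (fun s => g (ω * s)) t₁ t₂ t| ≤ ω ^ 2 * ((t - t₁) * (t₂ - t)) := by
  refine abs_sub_linInterp_le (f := fun s => g (ω * s)) (f' := fun s => g' (ω * s) * ω)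
    (fun x => ?_) (fun x y => ?_) hlt ht
  · exact (hg (ω * x)).comp x (by simpa using (hasDerivAt_id x).const_mul ω)
  · calc |g' (ω * x) * ω - g' (ω * y) * ω| = |g' (ω * x) - g' (ω * y)| * |ω| := by
          rw [← sub_mul, abs_mul]
      _ ≤ |ω * x - ω * y| * |ω| := mul_le_mul_of_nonneg_right (hg' _ _) (abs_nonneg ω)
      _ = ω ^ 2 * |x - y| := by rw [← mul_sub, abs_mul, mul_comm, ← mul_assoc, ← sq, sq_abs]

theorem integral_pow_four_mul_exp_neg_sq_div_four :
    ∫ x in Ioi (0 : ℝ), x ^ 4 * exp (-x ^ 2 / 4) = 12 * √π := by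
  have hΓ : Gamma (5 / 2) = 3 * √π / 4 := by
    have := Gamma_nat_add_half 2
    norm_num [Nat.doubleFactorial] at this
    exact this
  have h := integral_rpow_mul_exp_neg_mul_rpow (p := 2) (q := 4) (b := 1 / 4)
    two_pos (by norm_num) (by norm_num)
  norm_num [rpow_ofNat, hΓ] at h
  convert h using 1
  · congr! 4 with x; ring
  · ring

theorem setIntegral_sq_mul_exp_neg_sq_div_four_le {E : ℝ → ℝ} {C : ℝ}
    (hE : ∀ x, |E x| ≤ C * x ^ 2) :
    ∫ x in Ioi (0 : ℝ), E x ^ 2 * exp (-x ^ 2 / 4) ≤ C ^ 2 * (12 * √π) := by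
  have hint : IntegrableOn (fun x : ℝ => x ^ 4 * exp (-x ^ 2 / 4)) (Ioi 0) := by
    have := integrableOn_rpow_mul_exp_neg_mul_sq (b := 1 / 4) (by norm_num) (s := 4) (by norm_num)
    norm_num [rpow_ofNat] at this
    convert this using 4
    ring
  have hpt : ∀ x, E x ^ 2 * exp (-x ^ 2 / 4) ≤ C ^ 2 * (x ^ 4 * exp (-x ^ 2 / 4)) := by
    intro x
    have hsq : E x ^ 2 ≤ (C * x ^ 2) ^ 2 := by
      simpa only [sq_abs] using pow_le_pow_left₀ (abs_nonneg _) (hE x) 2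
    calc E x ^ 2 * exp (-x ^ 2 / 4) ≤ (C * x ^ 2) ^ 2 * exp (-x ^ 2 / 4) := by gcongr
      _ = C ^ 2 * (x ^ 4 * exp (-x ^ 2 / 4)) := by ring
  calc ∫ x in Ioi (0 : ℝ), E x ^ 2 * exp (-x ^ 2 / 4)
      ≤ ∫ x in Ioi (0 : ℝ), C ^ 2 * (x ^ 4 * exp (-x ^ 2 / 4)) :=
        integral_mono_of_nonneg (.of_forall fun x => by positivity) (hint.const_mul _)
          (.of_forall hpt)
    _ = C ^ 2 * (12 * √π) := by rw [integral_const_mul, integral_pow_four_mul_exp_neg_sq_div_four]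

theorem setIntegral_sq_sub_linInterp_comp_le {g g' : ℝ → ℝ} (hg : ∀ x, HasDerivAt g (g' x) x)
    (hg' : ∀ x y, |g' x - g' y| ≤ |x - y|) {t₁ t₂ t : ℝ} (hlt : t₁ < t₂) (ht : t ∈ Icc t₁ t₂)
    (l : ℝ) :
    ∫ lam in Ioi (0 : ℝ), (g (lam * t / l) - linInterp (fun s => g (lam * s / l)) t₁ t₂ t) ^ 2 *
        exp (-lam ^ 2 / 4) ≤ ((t₂ - t₁) ^ 2 / (4 * l ^ 2)) ^ 2 * (12 * √π) := by
  refine setIntegral_sq_mul_exp_neg_sq_div_four_le fun lam => ?_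
  have hmid : (t - t₁) * (t₂ - t) ≤ (t₂ - t₁) ^ 2 / 4 := by nlinarith [sq_nonneg (t₂ + t₁ - 2 * t)]
  calc _ ≤ (lam / l) ^ 2 * ((t - t₁) * (t₂ - t)) := by
        simpa only [mul_div_right_comm] using abs_sub_linInterp_comp_mul_le hg hg' (lam / l) hlt ht
    _ ≤ (lam / l) ^ 2 * ((t₂ - t₁) ^ 2 / 4) := by gcongr
    _ = (t₂ - t₁) ^ 2 / (4 * l ^ 2) * lam ^ 2 := by ring

theorem grf_interp_mean_square_error_general (t₁ t₂ : ℝ) (hlt : t₁ < t₂)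
    (l : ℝ) (t : ℝ) (ht : t ∈ Set.Icc t₁ t₂) :
    2 * Real.sqrt Real.pi *
        (∫ lam in Set.Ioi (0 : ℝ),
          (Real.cos (lam * t / l) - (Real.cos (lam * t₁ / l) +
              (Real.cos (lam * t₂ / l) - Real.cos (lam * t₁ / l)) / (t₂ - t₁) *
                (t - t₁))) ^ 2 * Real.exp (-lam ^ 2 / 4)) +
      2 * Real.sqrt Real.pi *
        (∫ lam in Set.Ioi (0 : ℝ),
          (Real.sin (lam * t / l) - (Real.sin (lam * t₁ / l) +
              (Real.sin (lam * t₂ / l) - Real.sin (lam * t₁ / l)) / (t₂ - t₁) *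
                (t - t₁))) ^ 2 * Real.exp (-lam ^ 2 / 4)) ≤
      24 * Real.pi * (t₂ - t₁) ^ 4 / l ^ 4 := by
  have hcos := setIntegral_sq_sub_linInterp_comp_le (g' := fun x => -sin x) hasDerivAt_cos
    (fun x y => by simpa only [neg_sub_neg, abs_sub_comm] using abs_sin_sub_sin_le y x) hlt ht l
  have hsin := setIntegral_sq_sub_linInterp_comp_le hasDerivAt_sin abs_cos_sub_cos_le hlt ht l
  have hπ : √π ^ 2 = π := sq_sqrt pi_nonneg
  calc _ ≤ 2 * √π * (((t₂ - t₁) ^ 2 / (4 * l ^ 2)) ^ 2 * (12 * √π)) +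
        2 * √π * (((t₂ - t₁) ^ 2 / (4 * l ^ 2)) ^ 2 * (12 * √π)) := by
        gcongr
        · exact hcos
        · exact hsin
    _ = 3 * π * (t₂ - t₁) ^ 4 / l ^ 4 := by linear_combination 3 * (t₂ - t₁) ^ 4 / l ^ 4 * hπ
    _ ≤ 24 * π * (t₂ - t₁) ^ 4 / l ^ 4 := by gcongr; norm_num

/-- **Mean-square linear interpolation error of the GRF spectral representation.**
With `h = t₂ − t₁`, `l > 0`, and `Π₁` the linear interpolation operator on
`[t₁, t₂]`, for every `t ∈ [t₁, t₂]`,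
`2√π ∫₀^∞ ((I−Π₁)cos(λ·/l))(t)² e^{−λ²/4} dλ
  + 2√π ∫₀^∞ ((I−Π₁)sin(λ·/l))(t)² e^{−λ²/4} dλ ≤ 24π h⁴ / l⁴`. -/
theorem grf_interp_mean_square_error (t₁ t₂ : ℝ) (hlt : t₁ < t₂)
    (l : ℝ) (hl : 0 < l) (t : ℝ) (ht : t ∈ Set.Icc t₁ t₂) :
    2 * Real.sqrt Real.pi *
        (∫ lam in Set.Ioi (0 : ℝ),
          (Real.cos (lam * t / l) - (Real.cos (lam * t₁ / l) +
              (Real.cos (lam * t₂ / l) - Real.cos (lam * t₁ / l)) / (t₂ - t₁) *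
                (t - t₁))) ^ 2 * Real.exp (-lam ^ 2 / 4)) +
      2 * Real.sqrt Real.pi *
        (∫ lam in Set.Ioi (0 : ℝ),
          (Real.sin (lam * t / l) - (Real.sin (lam * t₁ / l) +
              (Real.sin (lam * t₂ / l) - Real.sin (lam * t₁ / l)) / (t₂ - t₁) *
                (t - t₁))) ^ 2 * Real.exp (-lam ^ 2 / 4)) ≤
      24 * Real.pi * (t₂ - t₁) ^ 4 / l ^ 4 :=
  grf_interp_mean_square_error_general t₁ t₂ hlt l t ht
end
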